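/- Let α ∈ ℂ \ {0, 1} and Ω ∈ ℂ, and let R₁(z) = (12z³ + 4(1 − 5α + 4Ω)z² + α(5α − 4 − 16Ω)z + 3α²)/(16z²(z − 1)(z − α)²). Define w(z) = 1/(4z) + 1/(z − 1) + 1/(4(z − α)). If the Riccati identity w'(z) + w(z)² = R₁(z) holds for every z ∈ ℂ \ {0, 1, α}, then Ω = 0. -/

import Mathlib

/-!
The Ω-dependent part of the numerator of `R₁` is `16 Ω z (z - α)`, so `R₁` splits as its value at
`Ω = 0` plus `Ω / (z (z - 1) (z - α))`. The candidate `w` solves the Riccati equation for the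
`Ω = 0` part exactly, hence `w' + w² - R₁ = -Ω / (z (z - 1) (z - α))`; this vanishes at a single
regular point only if `Ω = 0`.
-/

noncomputable section

def kovacicCandidate (α : ℂ) (z : ℂ) : ℂ :=
  1 / (4 * z) + 1 / (z - 1) + 1 / (4 * (z - α))

def pendulumR₁ (α Ω : ℂ) (z : ℂ) : ℂ :=
  (12 * z ^ 3 + 4 * (1 - 5 * α + 4 * Ω) * z ^ 2 + α * (5 * α - 4 - 16 * Ω) * z + 3 * α ^ 2)
    / (16 * z ^ 2 * (z - 1) * (z - α) ^ 2)

end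

theorem hasDerivAt_one_div_const_mul_sub {𝕜 : Type*} [NontriviallyNormedField 𝕜]
    {c a z : 𝕜} (hc : c ≠ 0) (hz : z ≠ a) :
    HasDerivAt (fun x => 1 / (c * (x - a))) (-(1 / (c * (z - a) ^ 2))) z := by
  have hza : z - a ≠ 0 := sub_ne_zero.mpr hz
  have h := (hasDerivAt_const z (1 : 𝕜)).div ((hasDerivAt_id' z).sub_const a |>.const_mul c)
    (mul_ne_zero hc hza)
  exact h.congr_deriv (by field_simp; ring)

theorem hasDerivAt_kovacicCandidate {α z : ℂ} (hz0 : z ≠ 0) (hz1 : z ≠ 1) (hzα : z ≠ α) :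
    HasDerivAt (kovacicCandidate α)
      (-(1 / (4 * z ^ 2)) - 1 / (z - 1) ^ 2 - 1 / (4 * (z - α) ^ 2)) z := by
  have h0 := hasDerivAt_one_div_const_mul_sub (c := (4 : ℂ)) (a := 0) (by norm_num) hz0
  have h1 := hasDerivAt_one_div_const_mul_sub (c := (1 : ℂ)) one_ne_zero hz1
  have hα := hasDerivAt_one_div_const_mul_sub (c := (4 : ℂ)) (by norm_num) hzα
  simp only [sub_zero, one_mul] at h0 h1
  exact ((h0.add h1).add hα).congr_deriv (by ring)

theorem deriv_kovacicCandidate_add_sq {α Ω z : ℂ} (hz0 : z ≠ 0) (hz1 : z ≠ 1) (hzα : z ≠ α) :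
    deriv (kovacicCandidate α) z + kovacicCandidate α z ^ 2
      = pendulumR₁ α Ω z - Ω / (z * (z - 1) * (z - α)) := by
  have hz1' : z - 1 ≠ 0 := sub_ne_zero.mpr hz1
  have hzα' : z - α ≠ 0 := sub_ne_zero.mpr hzα
  rw [(hasDerivAt_kovacicCandidate hz0 hz1 hzα).deriv, kovacicCandidate, pendulumR₁]
  field_simp
  ring

theorem kovacic_case_one_forces_Omega_zero
    (α Ω : ℂ)
    (R₁ w : ℂ → ℂ)
    (hR₁ : R₁ = fun z => (12 * z ^ 3 + 4 * (1 - 5 * α + 4 * Ω) * z ^ 2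
        + α * (5 * α - 4 - 16 * Ω) * z + 3 * α ^ 2)
      / (16 * z ^ 2 * (z - 1) * (z - α) ^ 2))
    (hw : w = fun z => 1 / (4 * z) + 1 / (z - 1) + 1 / (4 * (z - α)))
    (hRiccati : ∀ z : ℂ, z ≠ 0 → z ≠ 1 → z ≠ α → deriv w z + w z ^ 2 = R₁ z) :
    Ω = 0 := by
  obtain ⟨z, hz⟩ := (Set.toFinite ({0, 1, α} : Set ℂ)).exists_notMem
  simp only [Set.mem_insert_iff, Set.mem_singleton_iff, not_or] at hz
  obtain ⟨hz0, hz1, hzα⟩ := hz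
  have hRiccati_z : deriv (kovacicCandidate α) z + kovacicCandidate α z ^ 2 = pendulumR₁ α Ω z := by
    subst hR₁ hw
    exact hRiccati z hz0 hz1 hzα
  rw [deriv_kovacicCandidate_add_sq hz0 hz1 hzα, sub_eq_self, div_eq_zero_iff] at hRiccati_z
  exact hRiccati_z.resolve_right
    (mul_ne_zero (mul_ne_zero hz0 (sub_ne_zero.mpr hz1)) (sub_ne_zero.mpr hzα))
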